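/- arXiv:2006.02156 — 2 statements merged into one kernel-verified Lean document; each statement's English description precedes it below -/
import Mathlib

section
/- Let H(x) := -x log x - (1-x) log(1-x) for 0 ≤ x ≤ 1 (with 0 log 0 := 0), and G(δ,ρ) := H(δ) + δ H(ρ) - (1 - δρ) log 2. Then for every δ with 1/2 < δ < 1, the function ρ ↦ G(δ, ρ) has exactly one zero in the open interval (0,1). -/
noncomputable def H (x : ℝ) : ℝ := -x * Real.log x - (1 - x) * Real.log (1 - x)

noncomputable def G (δ ρ : ℝ) : ℝ := H δ + δ * H ρ - (1 - δ * ρ) * Real.log 2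

lemma H_eq_binEntropy (x : ℝ) : H x = Real.binEntropy x := by
  simp [H, Real.binEntropy, Real.log_inv]; ring

theorem unique_zero_of_G {δ : ℝ} (hδ : 1 / 2 < δ) (hδ1 : δ < 1) :
    ∃! ρ : ℝ, ρ ∈ Set.Ioo (0 : ℝ) 1 ∧ G δ ρ = 0 := by
  have hδ0 : 0 < δ := lt_trans (by norm_num) hδ
  set f : ℝ → ℝ := fun ρ => G δ ρ with hf
  have hfeq : ∀ ρ, f ρ = Real.binEntropy δ + δ * Real.binEntropy ρ
      - (1 - δ * ρ) * Real.log 2 := by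
    intro ρ; simp [hf, G, H_eq_binEntropy]
  have hcont : Continuous f := by
    have : f = fun ρ => Real.binEntropy δ + δ * Real.binEntropy ρ
        - (1 - δ * ρ) * Real.log 2 := funext hfeq
    rw [this]
    have := Real.binEntropy_continuous
    fun_prop
  -- derivative
  have hderiv : ∀ ρ ∈ Set.Ioo (0:ℝ) 1,
      HasDerivAt f (δ * (Real.log (1 - ρ) - Real.log ρ + Real.log 2)) ρ := by
    intro ρ hρ
    have h1 : HasDerivAt Real.binEntropy (Real.log (1 - ρ) - Real.log ρ) ρ :=
      Real.hasDerivAt_binEntropy hρ.1.ne' (ne_of_lt hρ.2)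
    have h2 : HasDerivAt (fun ρ : ℝ => (1 - δ * ρ) * Real.log 2) (-δ * Real.log 2) ρ := by
      have : HasDerivAt (fun ρ : ℝ => 1 - δ * ρ) (-δ) ρ := by
        simpa using ((hasDerivAt_id ρ).const_mul δ).const_sub 1
      simpa using this.mul_const (Real.log 2)
    have h3 : HasDerivAt (fun ρ => Real.binEntropy δ + δ * Real.binEntropy ρ
        - (1 - δ * ρ) * Real.log 2)
        (δ * (Real.log (1 - ρ) - Real.log ρ) - (-δ * Real.log 2)) ρ :=
      ((h1.const_mul δ).const_add _).sub h2
    have heq : f = fun ρ => Real.binEntropy δ + δ * Real.binEntropy ρ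
        - (1 - δ * ρ) * Real.log 2 := funext hfeq
    rw [heq]
    convert h3 using 1; ring
  -- strict monotonicity on [0, 2/3]
  have mono : StrictMonoOn f (Set.Icc 0 (2/3)) := by
    apply strictMonoOn_of_deriv_pos (convex_Icc _ _) hcont.continuousOn
    intro ρ hρ
    rw [interior_Icc] at hρ
    have hρ1 : ρ < 1 := lt_trans hρ.2 (by norm_num)
    rw [(hderiv ρ ⟨hρ.1, hρ1⟩).deriv]
    have hlog : Real.log ρ < Real.log 2 + Real.log (1 - ρ) := by
      rw [← Real.log_mul (by norm_num) (by linarith : (1:ℝ) - ρ ≠ 0)]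
      exact Real.log_lt_log hρ.1 (by nlinarith [hρ.2])
    have : 0 < Real.log (1 - ρ) - Real.log ρ + Real.log 2 := by linarith
    positivity
  -- strict antitonicity on [2/3, 1]
  have anti : StrictAntiOn f (Set.Icc (2/3) 1) := by
    apply strictAntiOn_of_deriv_neg (convex_Icc _ _) hcont.continuousOn
    intro ρ hρ
    rw [interior_Icc] at hρ
    have hρ0 : 0 < ρ := lt_trans (by norm_num) hρ.1
    rw [(hderiv ρ ⟨hρ0, hρ.2⟩).deriv]
    have hlog : Real.log 2 + Real.log (1 - ρ) < Real.log ρ := by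
      rw [← Real.log_mul (by norm_num) (by have := hρ.2; intro h; linarith : (1:ℝ) - ρ ≠ 0)]
      exact Real.log_lt_log (by nlinarith [hρ.2]) (by nlinarith [hρ.1])
    have h4 : Real.log (1 - ρ) - Real.log ρ + Real.log 2 < 0 := by linarith
    nlinarith
  -- f 0 < 0
  have hG0 : f 0 < 0 := by
    rw [hfeq]
    simp only [Real.binEntropy_zero, mul_zero, sub_zero, add_zero, one_mul]
    have : Real.binEntropy δ < Real.log 2 :=
      Real.binEntropy_lt_log_two.2 (by intro h; rw [h] at hδ; norm_num at hδ)
    linarith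
  -- f 1 > 0
  have hG1 : 0 < f 1 := by
    rw [hfeq]
    simp only [Real.binEntropy_one, mul_zero, add_zero, mul_one]
    have hE : Real.binEntropy δ = -δ * Real.log δ - (1 - δ) * Real.log (1 - δ) := by
      simp [Real.binEntropy, Real.log_inv]; ring
    have ha : 0 < -δ * Real.log δ := by
      have := Real.log_neg hδ0 hδ1; nlinarith
    have hb : Real.log 2 + Real.log (1 - δ) ≤ 0 := by
      rw [← Real.log_mul (by norm_num) (by linarith : (1:ℝ) - δ ≠ 0)]
      exact Real.log_nonpos (by nlinarith) (by nlinarith)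
    have h1δ : 0 < 1 - δ := by linarith
    nlinarith
  -- f (2/3) > 0
  have hG23 : 0 < f (2/3) := by
    have := anti (Set.mem_Icc.2 ⟨le_refl _, by norm_num⟩)
      (Set.mem_Icc.2 ⟨by norm_num, le_refl _⟩) (by norm_num)
    linarith
  -- existence via IVT on [0, 2/3]
  have hsub : Set.Ioo (f 0) (f (2/3)) ⊆ f '' Set.Ioo 0 (2/3) :=
    intermediate_value_Ioo (by norm_num) hcont.continuousOn
  obtain ⟨ρ₀, hρ₀, hfρ₀⟩ := hsub ⟨hG0, hG23⟩
  -- any zero in (0,1) must lie in (0, 2/3)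
  have key : ∀ y ∈ Set.Ioo (0:ℝ) 1, f y = 0 → y < 2/3 := by
    intro y hy hfy
    by_contra hge
    push_neg at hge
    have : f 1 < f y := by
      rcases eq_or_lt_of_le hy.2.le with h | h
      · rw [h] at hfy; linarith
      · exact anti (Set.mem_Icc.2 ⟨hge, hy.2.le⟩)
          (Set.mem_Icc.2 ⟨by norm_num, le_refl _⟩) hy.2
    linarith
  refine ⟨ρ₀, ⟨⟨hρ₀.1, lt_trans hρ₀.2 (by norm_num)⟩, hfρ₀⟩, ?_⟩
  rintro y ⟨hy, hfy⟩
  have hy23 : y < 2/3 := key y hy hfy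
  have hρ₀23 : ρ₀ < 2/3 := hρ₀.2
  exact mono.injOn (Set.mem_Icc.2 ⟨hy.1.le, hy23.le⟩)
    (Set.mem_Icc.2 ⟨hρ₀.1.le, hρ₀23.le⟩) (hfy.trans hfρ₀.symm)
end

section
/- Let x_1, ..., x_m be points in R^n in linearly general position (every subset of size at most n is linearly independent). Then the origin lies in conv{x_1, ..., x_m} if and only if the origin lies in the relative interior of conv{x_1, ..., x_m}. -/
/-!
Write `0 = ∑ wᵢ xᵢ` as a convex combination with positive weights. In linearly general position
no `n` of the `xᵢ` satisfy a nontrivial linear relation, so more than `n` points carry weight and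
they span `ℝⁿ`. The map `c ↦ ∑ cᵢ xᵢ` on their weights is then a surjective linear map, hence
open, and small perturbations of the weights of `0` stay positive, so the hull contains a
neighbourhood of `0`: the origin is even an interior point.
-/

open Set Finset Module Topology

def InLinearGeneralPosition (𝕜 : Type*) {ι E : Type*} [DivisionRing 𝕜] [AddCommGroup E]
    [Module 𝕜 E] (x : ι → E) : Prop :=
  ∀ s : Finset ι, s.card ≤ finrank 𝕜 E → LinearIndependent 𝕜 (fun i : s => x i)

namespace InLinearGeneralPosition

variable {𝕜 ι E : Type*} [DivisionRing 𝕜] [AddCommGroup E] [Module 𝕜 E] {x : ι → E}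

theorem finrank_lt_card (hx : InLinearGeneralPosition 𝕜 x) {S : Finset ι} {w : ι → 𝕜}
    (hwx : ∑ i ∈ S, w i • x i = 0) (hw : ∃ i ∈ S, w i ≠ 0) : finrank 𝕜 E < S.card := by
  by_contra! hS
  obtain ⟨i, hi, hwi⟩ := hw
  exact hwi <| Fintype.linearIndependent_iff.1 (hx S hS) (fun i => w i)
    (by rwa [sum_coe_sort S fun i => w i • x i]) ⟨i, hi⟩

theorem span_eq_top [FiniteDimensional 𝕜 E] (hx : InLinearGeneralPosition 𝕜 x) {S : Finset ι}
    (hS : finrank 𝕜 E ≤ S.card) : Submodule.span 𝕜 (range fun i : S => x i) = ⊤ := by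
  obtain ⟨T, hTS, hT⟩ := exists_subset_card_eq hS
  rw [eq_top_iff, ← (hx T hT.le).span_eq_top_of_card_eq_finrank' (by simpa using hT)]
  exact Submodule.span_mono <| by
    rintro _ ⟨i, rfl⟩
    exact ⟨⟨i, hTS i.2⟩, rfl⟩

end InLinearGeneralPosition

theorem exists_pos_weights_of_mem_convexHull_range {𝕜 E ι : Type*} [Field 𝕜] [LinearOrder 𝕜]
    [IsStrictOrderedRing 𝕜] [AddCommGroup E] [Module 𝕜 E] {v : ι → E} {y : E}
    (hy : y ∈ convexHull 𝕜 (range v)) :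
    ∃ (S : Finset ι) (w : ι → 𝕜), (∀ i ∈ S, 0 < w i) ∧ ∑ i ∈ S, w i = 1 ∧
      ∑ i ∈ S, w i • v i = y := by
  classical
  rw [convexHull_range_eq_exists_affineCombination] at hy
  obtain ⟨s, w, hw₀, hw₁, rfl⟩ := hy
  refine ⟨s.filter (w · ≠ 0), w, fun i hi => ?_, by rwa [sum_filter_ne_zero], ?_⟩
  · rw [mem_filter] at hi
    exact (hw₀ i hi.1).lt_of_ne' hi.2
  · rw [s.affineCombination_eq_linear_combination v w hw₁, sum_filter_of_ne]
    intro i _ hne h0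
    simp [h0] at hne

theorem zero_mem_interior_convexHull_of_span_eq_top {ι E : Type*} [Fintype ι] [AddCommGroup E]
    [Module ℝ E] [TopologicalSpace E] [IsTopologicalAddGroup E] [ContinuousSMul ℝ E]
    [T2Space E] [FiniteDimensional ℝ E] {x : ι → E} {w : ι → ℝ} (hw : ∀ i, 0 < w i)
    (hw₁ : ∑ i, w i = 1) (hwx : ∑ i, w i • x i = 0)
    (hspan : Submodule.span ℝ (range x) = ⊤) :
    (0 : E) ∈ interior (convexHull ℝ (range x)) := by
  set F := Fintype.linearCombination ℝ x
  have hF : IsOpenMap F := F.isOpenMap_of_finiteDimensional <| by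
    rw [← LinearMap.range_eq_top, Fintype.range_linearCombination, hspan]
  -- `c` and `c + (1 - ∑ c) • w` have the same image, and the latter has total weight one
  set shift : (ι → ℝ) → ι → ℝ := fun c => c + (1 - ∑ i, c i) • w
  have hFw : F w = 0 := (Fintype.linearCombination_apply ..).trans hwx
  have hF_shift c : F (shift c) = F c := by
    simp only [shift, map_add, map_smul, hFw, smul_zero, add_zero]
  have hshift : {c | ∀ i, 0 < shift c i} ∈ 𝓝 0 := by
    refine Filter.eventually_all.2 fun i => continuousAt_const.eventually_lt ?_ ?_
    · fun_prop
    · simpa [shift] using hw i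
  rw [mem_interior_iff_mem_nhds, ← map_zero F]
  refine Filter.mem_of_superset (hF.image_mem_nhds hshift) ?_
  rintro _ ⟨c, hc, rfl⟩
  rw [← hF_shift]
  refine mem_convexHull_of_exists_fintype (shift c) x (fun i => (hc i).le) ?_ (mem_range_self ·)
    (Fintype.linearCombination_apply ..).symm
  simp only [shift, Pi.add_apply, Pi.smul_apply, smul_eq_mul]
  rw [sum_add_distrib, ← mul_sum, hw₁]
  ring

theorem mem_convexHull_iff_mem_intrinsicInterior_general (m n : ℕ)
    (x : Fin m → EuclideanSpace ℝ (Fin n))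
    (hgen : ∀ s : Finset (Fin m), s.card ≤ n →
      LinearIndependent ℝ (fun i : s => x i)) :
    (0 : EuclideanSpace ℝ (Fin n)) ∈ convexHull ℝ (Set.range x) ↔
      (0 : EuclideanSpace ℝ (Fin n)) ∈ intrinsicInterior ℝ (convexHull ℝ (Set.range x)) := by
  refine ⟨fun h0 => ?_, fun h => intrinsicInterior_subset h⟩
  have hx : InLinearGeneralPosition ℝ x := by
    rwa [InLinearGeneralPosition, finrank_euclideanSpace_fin]
  obtain ⟨S, w, hw, hw₁, hwx⟩ := exists_pos_weights_of_mem_convexHull_range h0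
  have hcard : finrank ℝ _ < S.card :=
    hx.finrank_lt_card hwx (exists_ne_zero_of_sum_ne_zero (hw₁ ▸ one_ne_zero))
  have hint := zero_mem_interior_convexHull_of_span_eq_top (x := fun i : S => x i)
    (fun i => hw i i.2) (by rwa [sum_coe_sort S w]) (by rwa [sum_coe_sort S fun i => w i • x i])
    (hx.span_eq_top hcard.le)
  exact interior_subset_intrinsicInterior <|
    interior_mono (convexHull_mono (range_comp_subset_range _ _)) hint

theorem mem_convexHull_iff_mem_intrinsicInterior (m n : ℕ) (hm : 1 ≤ m)
    (x : Fin m → EuclideanSpace ℝ (Fin n))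
    (hgen : ∀ s : Finset (Fin m), s.card ≤ n →
      LinearIndependent ℝ (fun i : s => x i)) :
    (0 : EuclideanSpace ℝ (Fin n)) ∈ convexHull ℝ (Set.range x) ↔
      (0 : EuclideanSpace ℝ (Fin n)) ∈ intrinsicInterior ℝ (convexHull ℝ (Set.range x)) :=
  mem_convexHull_iff_mem_intrinsicInterior_general m n x hgen
end
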